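/- For a constant matrix A ∈ ℂ^{n×n} (viewed as a T-periodic function), the point spectrum of 𝒜 − 𝒩 on ℓ²(ℤ, ℂⁿ) is exactly {λ_i + jkω : λ_i ∈ spec(A), k ∈ ℤ}, where 𝒜 = I_{ℓ²(ℤ)} ⊗-style block operator with A on the block diagonal and 𝒩 = diag over m of jmω I_n. -/

import Mathlib

open Matrix

/-- View a plain vector `Fin n → ℂ` as an element of `EuclideanSpace ℂ (Fin n)`. -/
noncomputable def vecE {n : ℕ} (v : Fin n → ℂ) : EuclideanSpace ℂ (Fin n) :=
  (WithLp.equiv 2 _).symm v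

open scoped ENNReal

theorem memℓp_pi_single {ι : Type*} [DecidableEq ι] {E : ι → Type*}
    [∀ i, NormedAddCommGroup (E i)] (p : ℝ≥0∞) (i : ι) (a : E i) : Memℓp (Pi.single i a) p :=
  (memℓp_zero ((Set.finite_singleton i).subset fun _ hj =>
    by_contra fun hji => hj (Pi.single_eq_of_ne hji a))).of_exponent_ge zero_le

section PointSpectrum

variable {ι : Type*} {n : ℕ} (A : Matrix (Fin n) (Fin n) ℂ)

theorem vecE_mulVec_sub_smul_eq_smul_iff (c μ : ℂ) (x : EuclideanSpace ℂ (Fin n)) :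
    vecE (A *ᵥ x) - c • x = μ • x ↔ A *ᵥ x = (μ + c) • x := by
  rw [sub_eq_iff_eq_add, ← add_smul, ← (WithLp.ofLp_injective 2).eq_iff]
  rfl

/-- The operator `X ↦ (A X_m - c_m X_m)_m` on `ℓᵖ(ι, ℂⁿ)` acts on each block separately, so an
eigenvector may be taken supported on a single block. -/
theorem exists_memℓp_blockwise_eigenvector_iff (p : ℝ≥0∞) (c : ι → ℂ) (μ : ℂ) :
    (∃ X : ι → EuclideanSpace ℂ (Fin n), Memℓp X p ∧ X ≠ 0 ∧
        ∀ m, vecE (A *ᵥ X m) - c m • X m = μ • X m) ↔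
      ∃ (lam : ℂ) (m : ι), (∃ v : Fin n → ℂ, v ≠ 0 ∧ A *ᵥ v = lam • v) ∧ μ = lam - c m := by
  simp only [vecE_mulVec_sub_smul_eq_smul_iff]
  constructor
  · rintro ⟨X, -, hX0, hX⟩
    obtain ⟨m, hm⟩ := Function.ne_iff.mp hX0
    exact ⟨μ + c m, m, ⟨WithLp.ofLp (X m), by simpa using hm, hX m⟩, by ring⟩
  · rintro ⟨lam, m, ⟨v, hv0, hv⟩, rfl⟩
    classical
    refine ⟨(Pi.single m (vecE v) : ι → EuclideanSpace ℂ (Fin n)), memℓp_pi_single p m _, ?_,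
      fun k => ?_⟩
    · simpa [Pi.single_eq_zero_iff, vecE] using hv0
    rcases eq_or_ne k m with rfl | hkm
    · simpa [sub_add_cancel, vecE] using hv
    · simp [Pi.single_eq_of_ne hkm]

end PointSpectrum

theorem harmonic_point_spectrum_constant_general
    {n : ℕ} (T : ℝ) (A : Matrix (Fin n) (Fin n) ℂ) :
    ∀ μ : ℂ,
      (∃ X : ℤ → EuclideanSpace ℂ (Fin n),
        Memℓp X 2 ∧ X ≠ 0 ∧
        ∀ m : ℤ,
          vecE (A.mulVec (X m))
            - (Complex.I * (m : ℂ) * ((2 * Real.pi / T : ℝ) : ℂ)) • X m = μ • X m)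
      ↔ (∃ (lam : ℂ) (k : ℤ),
          (∃ v : Fin n → ℂ, v ≠ 0 ∧ A.mulVec v = lam • v) ∧
          μ = lam + Complex.I * (k : ℂ) * ((2 * Real.pi / T : ℝ) : ℂ)) := by
  intro μ
  refine (exists_memℓp_blockwise_eigenvector_iff A 2
    (fun m : ℤ => Complex.I * m * ((2 * Real.pi / T : ℝ) : ℂ)) μ).trans ?_
  refine exists_congr fun lam => (Equiv.neg ℤ).exists_congr fun m => and_congr_right fun _ => ?_
  simp only [Equiv.neg_apply, Int.cast_neg]
  constructor <;> rintro rfl <;> ring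

/-- for a constant matrix `A`, the point spectrum of `𝒜 − 𝒩` on
`ℓ²(ℤ, ℂⁿ)` is exactly `{λᵢ + jkω : λᵢ ∈ spec(A), k ∈ ℤ}`. -/
theorem harmonic_point_spectrum_constant
    {n : ℕ} (T : ℝ) (hT : 0 < T) (A : Matrix (Fin n) (Fin n) ℂ) :
    ∀ μ : ℂ,
      (∃ X : ℤ → EuclideanSpace ℂ (Fin n),
        Memℓp X 2 ∧ X ≠ 0 ∧
        ∀ m : ℤ,
          vecE (A.mulVec (X m))
            - (Complex.I * (m : ℂ) * ((2 * Real.pi / T : ℝ) : ℂ)) • X m = μ • X m)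
      ↔ (∃ (lam : ℂ) (k : ℤ),
          (∃ v : Fin n → ℂ, v ≠ 0 ∧ A.mulVec v = lam • v) ∧
          μ = lam + Complex.I * (k : ℂ) * ((2 * Real.pi / T : ℝ) : ℂ)) :=
  harmonic_point_spectrum_constant_general T A
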